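/- Let $a_k, b_k, c_k, d_k \in \mathbb{Z}$ with $|a_k d_k - b_k c_k| = 1$, and suppose $d_k - c_k \equiv a_k - b_k \pmod{3}$ (i.e. $D_k \in \Gamma_2$). Then for the digit set $D_k = \{(0,0)^t, (a_k,b_k)^t, (c_k,d_k)^t\}$, the zero set of the mask polynomial satisfies $\mathcal{Z}(m_{D_k}) = \left(\frac{1}{3}(1,2)^t + \mathbb{Z}^2\right) \cup \left(\frac{2}{3}(1,2)^t + \mathbb{Z}^2\right)$. -/

import Mathlib

/-!
With `x = ⟨ξ, (a, b)⟩` and `y = ⟨ξ, (c, d)⟩`, the mask polynomial vanishes iff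
`1 + e(x) + e(y) = 0`. As `e(x)`, `e(y)` lie on the unit circle, this forces `e(x)e(y) = 1` and
then `e(x)` to be a primitive cube root of unity: `3 (x, y)` is an integer vector congruent to a
nonzero multiple of `(1, -1)` modulo `3`. The condition `D ∈ Γ₂` says exactly that `(1, -1)` is an
eigenvector of `M = [[a, b], [c, d]]` modulo `3`, with eigenvalue `a - b`, a unit because
`det M ≡ (a - b)(b + d)`. So `M` and `M⁻¹ = det M · adj M` both preserve this set of points, and the
zero set `{ξ | Mξ ∈ ·}` is the set itself.
-/

/-- The mask polynomial of a finite digit set `D ⊂ ℤ²`. -/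
noncomputable def maskPoly (D : Finset (ℤ × ℤ)) (ξ : ℝ × ℝ) : ℂ :=
  (D.card : ℂ)⁻¹ * ∑ w ∈ D, Complex.exp (2 * (Real.pi : ℂ) * Complex.I *
    ((ξ.1 * w.1 + ξ.2 * w.2 : ℝ) : ℂ))

open Complex

theorem one_add_add_inv_eq_zero_iff {K : Type*} [Field K] (h3 : (3 : K) ≠ 0) (u : K) :
    1 + u + u⁻¹ = 0 ↔ u ^ 3 = 1 ∧ u ≠ 1 := by
  rcases eq_or_ne u 0 with rfl | hu
  · simp
  have hfactor : u ^ 3 - 1 = u * (u - 1) * (1 + u + u⁻¹) := by field_simp; ring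
  constructor
  · intro h
    refine ⟨by linear_combination hfactor + u * (u - 1) * h, ?_⟩
    rintro rfl
    apply h3
    linear_combination h
  · rintro ⟨h1, hne⟩
    have h0 : u * (u - 1) * (1 + u + u⁻¹) = 0 := by rw [← hfactor, h1, sub_self]
    exact (mul_eq_zero.mp h0).resolve_left (mul_ne_zero hu (sub_ne_zero.mpr hne))

noncomputable def expTwoPiI (t : ℝ) : ℂ := exp (2 * (Real.pi : ℂ) * I * (t : ℂ))

theorem expTwoPiI_add (s t : ℝ) : expTwoPiI (s + t) = expTwoPiI s * expTwoPiI t := by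
  rw [expTwoPiI, expTwoPiI, expTwoPiI, ← exp_add, ofReal_add, mul_add]

theorem expTwoPiI_natCast_mul (n : ℕ) (t : ℝ) : expTwoPiI (n * t) = expTwoPiI t ^ n := by
  rw [expTwoPiI, expTwoPiI, ← exp_nat_mul]
  push_cast
  ring_nf

theorem expTwoPiI_eq_one_iff (t : ℝ) : expTwoPiI t = 1 ↔ ∃ k : ℤ, t = k := by
  rw [expTwoPiI, exp_eq_one_iff]
  refine exists_congr fun k => ?_
  rw [mul_comm _ (t : ℂ), mul_left_inj' two_pi_I_ne_zero]
  norm_cast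

theorem conj_expTwoPiI (t : ℝ) : starRingEnd ℂ (expTwoPiI t) = (expTwoPiI t)⁻¹ := by
  rw [expTwoPiI, ← exp_conj, ← exp_neg]
  simp only [map_mul, conj_I, conj_ofReal, map_ofNat]
  ring_nf

theorem expTwoPiI_add_eq_one_of (x y : ℝ) (h : 1 + expTwoPiI x + expTwoPiI y = 0) :
    expTwoPiI (x + y) = 1 := by
  have hx : expTwoPiI x ≠ 0 := exp_ne_zero _
  have hy : expTwoPiI y ≠ 0 := exp_ne_zero _
  -- conjugating gives `1 + u⁻¹ + v⁻¹ = 0`, i.e. `u v + u + v = 0`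
  have hconj : 1 + (expTwoPiI x)⁻¹ + (expTwoPiI y)⁻¹ = 0 := by
    simpa [conj_expTwoPiI] using congrArg (starRingEnd ℂ) h
  field_simp at hconj
  rw [expTwoPiI_add]
  linear_combination hconj - h

theorem one_add_expTwoPiI_add_expTwoPiI_eq_zero_iff (x y : ℝ) :
    1 + expTwoPiI x + expTwoPiI y = 0 ↔
      (∃ j : ℤ, x + y = j) ∧ (∃ k : ℤ, 3 * x = k) ∧ ¬ ∃ n : ℤ, x = n := by
  rw [← expTwoPiI_eq_one_iff, ← expTwoPiI_eq_one_iff, ← expTwoPiI_eq_one_iff,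
    show (3 : ℝ) = (3 : ℕ) by norm_num, expTwoPiI_natCast_mul,
    ← one_add_add_inv_eq_zero_iff three_ne_zero]
  have hinv (h : expTwoPiI (x + y) = 1) : expTwoPiI y = (expTwoPiI x)⁻¹ :=
    eq_inv_of_mul_eq_one_right (by rwa [← expTwoPiI_add])
  constructor
  · intro h
    have hxy := expTwoPiI_add_eq_one_of x y h
    exact ⟨hxy, hinv hxy ▸ h⟩
  · rintro ⟨hxy, h⟩
    rwa [hinv hxy]

theorem maskPoly_zero_insert_pair {u v : ℤ × ℤ} (hu : (0, 0) ≠ u) (hv : (0, 0) ≠ v)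
    (huv : u ≠ v) (ξ : ℝ × ℝ) :
    maskPoly {(0, 0), u, v} ξ = 3⁻¹ *
      (1 + expTwoPiI (ξ.1 * u.1 + ξ.2 * u.2) + expTwoPiI (ξ.1 * v.1 + ξ.2 * v.2)) := by
  have h0 : ((0, 0) : ℤ × ℤ) ∉ ({u, v} : Finset (ℤ × ℤ)) := by simp [hu, hv]
  have hu' : u ∉ ({v} : Finset (ℤ × ℤ)) := by simpa using huv
  rw [maskPoly, Finset.sum_insert h0, Finset.sum_insert hu', Finset.sum_singleton,
    Finset.card_insert_of_notMem h0, Finset.card_insert_of_notMem hu', Finset.card_singleton]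
  simp [expTwoPiI, add_assoc]

def IsAntidiagonal {F : Type*} [Field F] (v : F × F) : Prop := v.1 ≠ 0 ∧ v.1 + v.2 = 0

theorem IsAntidiagonal.image {F : Type*} [Field F] {p q r s : F} (hpq : p - q ≠ 0)
    (hM : p - q + (r - s) = 0) {v : F × F} (hv : IsAntidiagonal v) :
    IsAntidiagonal (p * v.1 + q * v.2, r * v.1 + s * v.2) := by
  obtain ⟨h1, h12⟩ := hv
  refine ⟨?_, ?_⟩
  · have : p * v.1 + q * v.2 = (p - q) * v.1 := by linear_combination q * h12
    rw [this]
    exact mul_ne_zero hpq h1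
  · linear_combination v.1 * hM + (q + s) * h12

/-- The pairs `(x, y)` in `(1/3, 2/3) + ℤ²` or `(2/3, 1/3) + ℤ²`: `3 (x, y)` is an integer vector
congruent to a nonzero multiple of `(1, -1)` modulo `3`. -/
def thirdPoints : Set (ℝ × ℝ) :=
  {η | ∃ k : ℤ × ℤ, IsAntidiagonal ((k.1 : ZMod 3), (k.2 : ZMod 3)) ∧
    3 * η.1 = k.1 ∧ 3 * η.2 = k.2}

theorem isAntidiagonal_intCast_iff (k : ℤ × ℤ) :
    IsAntidiagonal ((k.1 : ZMod 3), (k.2 : ZMod 3)) ↔ ¬ 3 ∣ k.1 ∧ 3 ∣ k.1 + k.2 := by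
  rw [IsAntidiagonal, ne_eq, ← Int.cast_add, ZMod.intCast_zmod_eq_zero_iff_dvd,
    ZMod.intCast_zmod_eq_zero_iff_dvd]
  rfl

theorem mk_mem_thirdPoints_iff (x y : ℝ) :
    (x, y) ∈ thirdPoints ↔ (∃ j : ℤ, x + y = j) ∧ (∃ k : ℤ, 3 * x = k) ∧ ¬ ∃ n : ℤ, x = n := by
  simp only [thirdPoints, Set.mem_ofPred_eq, isAntidiagonal_intCast_iff]
  constructor
  · rintro ⟨k, ⟨hk1, j, hj⟩, hx, hy⟩
    refine ⟨⟨j, ?_⟩, ⟨k.1, hx⟩, ?_⟩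
    · have : (k.1 : ℝ) + k.2 = 3 * j := by exact_mod_cast hj
      linarith
    · rintro ⟨n, rfl⟩
      exact hk1 ⟨n, by exact_mod_cast hx.symm⟩
  · rintro ⟨⟨j, hj⟩, ⟨k, hk⟩, hn⟩
    refine ⟨(k, 3 * j - k), ⟨?_, ⟨j, by ring⟩⟩, hk, by push_cast; linarith⟩
    rintro ⟨n, rfl⟩
    exact hn ⟨n, by push_cast at hk; linarith⟩

theorem mem_thirdPoints_iff_expTwoPiI (x y : ℝ) :
    (x, y) ∈ thirdPoints ↔ 1 + expTwoPiI x + expTwoPiI y = 0 := by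
  rw [mk_mem_thirdPoints_iff, one_add_expTwoPiI_add_expTwoPiI_eq_zero_iff]

theorem exists_eq_div_three_add_intCast {t : ℝ} {k r : ℤ} (ht : 3 * t = k) (hk : 3 ∣ k - r) :
    ∃ z : ℤ, t = r / 3 + z := by
  obtain ⟨z, hz⟩ := hk
  refine ⟨z, ?_⟩
  have : (k : ℝ) = r + 3 * z := by exact_mod_cast (by omega : k = r + 3 * z)
  linarith

theorem thirdPoints_eq_union :
    thirdPoints = {ξ : ℝ × ℝ | ∃ z : ℤ × ℤ, ξ = (1/3 + (z.1:ℝ), 2/3 + (z.2:ℝ))} ∪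
      {ξ : ℝ × ℝ | ∃ z : ℤ × ℤ, ξ = (2/3 + (z.1:ℝ), 4/3 + (z.2:ℝ))} := by
  ext ξ
  constructor
  · rintro ⟨k, hk, h1, h2⟩
    rw [isAntidiagonal_intCast_iff] at hk
    have hres : 3 ∣ k.1 - 1 ∧ 3 ∣ k.2 - 2 ∨ 3 ∣ k.1 - 2 ∧ 3 ∣ k.2 - 4 := by omega
    rcases hres with ⟨hr1, hr2⟩ | ⟨hr1, hr2⟩
    · obtain ⟨z₁, hz₁⟩ := exists_eq_div_three_add_intCast h1 hr1
      obtain ⟨z₂, hz₂⟩ := exists_eq_div_three_add_intCast h2 hr2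
      exact Or.inl ⟨(z₁, z₂), Prod.ext (by simpa using hz₁) (by simpa using hz₂)⟩
    · obtain ⟨z₁, hz₁⟩ := exists_eq_div_three_add_intCast h1 hr1
      obtain ⟨z₂, hz₂⟩ := exists_eq_div_three_add_intCast h2 hr2
      exact Or.inr ⟨(z₁, z₂), Prod.ext (by simpa using hz₁) (by simpa using hz₂)⟩
  · rintro (⟨z, rfl⟩ | ⟨z, rfl⟩)
    · refine ⟨(1 + 3 * z.1, 2 + 3 * z.2), ?_, by push_cast; ring, by push_cast; ring⟩
      rw [isAntidiagonal_intCast_iff]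
      omega
    · refine ⟨(2 + 3 * z.1, 4 + 3 * z.2), ?_, by push_cast; ring, by push_cast; ring⟩
      rw [isAntidiagonal_intCast_iff]
      omega

theorem mem_thirdPoints_image {p q r s : ℤ} (hpq : (p : ZMod 3) - q ≠ 0)
    (hΓ : (s : ZMod 3) - r = p - q) {ξ : ℝ × ℝ} (hξ : ξ ∈ thirdPoints) :
    (ξ.1 * p + ξ.2 * q, ξ.1 * r + ξ.2 * s) ∈ thirdPoints := by
  obtain ⟨k, hk, h1, h2⟩ := hξ
  refine ⟨(p * k.1 + q * k.2, r * k.1 + s * k.2), ?_, ?_, ?_⟩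
  · push_cast
    exact hk.image hpq (by linear_combination -hΓ)
  · push_cast
    linear_combination (p : ℝ) * h1 + q * h2
  · push_cast
    linear_combination (r : ℝ) * h1 + s * h2

theorem mem_thirdPoints_image_iff {a b c d : ℤ} (hdet : |a * d - b * c| = 1)
    (hΓ : d - c ≡ a - b [ZMOD 3]) (ξ : ℝ × ℝ) :
    (ξ.1 * a + ξ.2 * b, ξ.1 * c + ξ.2 * d) ∈ thirdPoints ↔ ξ ∈ thirdPoints := by
  set δ := a * d - b * c with hδ
  have hδδ : δ * δ = 1 := by
    rcases (abs_eq zero_le_one).mp hdet with h | h <;> rw [h] <;> norm_num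
  have hΓ' : (d : ZMod 3) - c = a - b := by
    exact_mod_cast (ZMod.intCast_eq_intCast_iff _ _ 3).mpr hΓ
  -- modulo 3 the determinant factors through the eigenvalue `a - b` of `(1, -1)`
  have hfactor : (δ : ZMod 3) = (a - b) * (b + d) := by
    push_cast [hδ]
    linear_combination b * hΓ'
  have hunit : (δ : ZMod 3) ≠ 0 := by
    intro h
    have := congrArg (Int.cast : ℤ → ZMod 3) hδδ
    push_cast [h] at this
    exact zero_ne_one this
  obtain ⟨hab, hbd⟩ := mul_ne_zero_iff.mp (hfactor ▸ hunit)
  constructor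
  · intro h
    have hδδ' : ((a : ℝ) * d - b * c) * (a * d - b * c) = 1 := by exact_mod_cast hδδ
    convert mem_thirdPoints_image (p := δ * d) (q := -(δ * b)) (r := -(δ * c)) (s := δ * a)
      ?_ ?_ h using 1
    · ext
      · push_cast [hδ]
        linear_combination -ξ.1 * hδδ'
      · push_cast [hδ]
        linear_combination -ξ.2 * hδδ'
    · push_cast
      rw [show (δ : ZMod 3) * d - -(δ * b) = δ * (b + d) by ring]
      exact mul_ne_zero hunit hbd
    · push_cast
      linear_combination (-δ : ZMod 3) * hΓ'
  · exact mem_thirdPoints_image hab hΓ'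

/-- For a digit set `D = {(0,0),(a,b),(c,d)} ∈ Γ₂` with `|ad - bc| = 1`, the zero set of the
mask polynomial is `(1/3)(1,2)ᵗ + ℤ² ∪ (2/3)(1,2)ᵗ + ℤ²`. -/
theorem stmt5 (a b c d : ℤ) (hdet : |a * d - b * c| = 1)
    (hΓ : (d - c) ≡ (a - b) [ZMOD 3]) :
    {ξ : ℝ × ℝ | maskPoly ({(0,0), (a,b), (c,d)} : Finset (ℤ × ℤ)) ξ = 0} =
      {ξ : ℝ × ℝ | ∃ z : ℤ × ℤ, ξ = (1/3 + (z.1:ℝ), 2/3 + (z.2:ℝ))} ∪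
      {ξ : ℝ × ℝ | ∃ z : ℤ × ℤ, ξ = (2/3 + (z.1:ℝ), 4/3 + (z.2:ℝ))} := by
  have hdet0 : a * d - b * c ≠ 0 := by
    intro h
    simp [h] at hdet
  have h0ab : ((0, 0) : ℤ × ℤ) ≠ (a, b) := by
    rintro ⟨⟩
    simp at hdet0
  have h0cd : ((0, 0) : ℤ × ℤ) ≠ (c, d) := by
    rintro ⟨⟩
    simp at hdet0
  have habcd : ((a, b) : ℤ × ℤ) ≠ (c, d) := by
    rintro ⟨⟩
    exact hdet0 (by ring)
  ext ξ
  rw [Set.mem_ofPred_eq, maskPoly_zero_insert_pair h0ab h0cd habcd, mul_eq_zero,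
    or_iff_right (inv_ne_zero three_ne_zero), ← mem_thirdPoints_iff_expTwoPiI,
    ← thirdPoints_eq_union]
  exact mem_thirdPoints_image_iff hdet hΓ ξ
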